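/- arXiv:math/0703809 — 4 statements merged into one kernel-verified Lean document; each statement's English description precedes it below -/
import Mathlib

section
/- Suppose h : ℂⁿ → ℂ is an entire function of exponential type at most τ = (τ_1, …, τ_n) and that |h| is bounded on ℝⁿ by a constant D ≥ 0. Then |h(z)| ≤ D · exp(τ_1 |Im z_1| + ⋯ + τ_n |Im z_n|) for all z = (z_1, …, z_n) ∈ ℂⁿ. -/
/-!
Fix `ε > 0`, so that `|h(z)| ≤ A exp(∑ cₖ|zₖ|)` with `cₖ = τₖ + ε`. In one variable, rotating the
upper half-plane onto the right one, `w ↦ g(iw) e^{-cw}` has order one, is bounded on both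
boundary rays (by `D` on the imaginary axis, by `A` on the real one), so Phragmén–Lindelöf gives
`|g(z)| ≤ D e^{c |Im z|}`. In several variables, free the coordinates from the real axis one at a
time: each slice `w ↦ h(z₁, …, w, …, zₙ)` is bounded on `ℝ` by the previous step. Finally let
`ε → 0`.
-/

/-- An entire function `g : ℂⁿ → ℂ` is of exponential type at most `τ` if for all `ε > 0`
there is `A_ε` with `|g(z)| ≤ A_ε exp((τ₁+ε)|z₁| + ⋯ + (τₙ+ε)|zₙ|)` for all `z`. -/
def ExpTypeLE {n : ℕ} (g : (Fin n → ℂ) → ℂ) (τ : Fin n → ℝ) : Prop :=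
  ∀ ε : ℝ, 0 < ε → ∃ A : ℝ, ∀ z : Fin n → ℂ,
    ‖g z‖ ≤ A * Real.exp (∑ k, (τ k + ε) * ‖z k‖)

open Complex Filter Topology

theorem norm_le_mul_exp_mul_im_of_bounded_on_real {g : ℂ → ℂ} (hg : Differentiable ℂ g)
    {A c D : ℝ} (hgrowth : ∀ z, ‖g z‖ ≤ A * Real.exp (c * ‖z‖))
    (hreal : ∀ x : ℝ, ‖g x‖ ≤ D) {z : ℂ} (hz : 0 ≤ z.im) :
    ‖g z‖ ≤ D * Real.exp (c * z.im) := by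
  set F : ℂ → ℂ := fun w => g (I * w) * cexp (-c * w)
  have norm_F : ∀ w, ‖F w‖ = ‖g (I * w)‖ * Real.exp (-c * w.re) := fun w => by
    simp [F, norm_exp]
  have growth_F : ∀ w, ‖F w‖ ≤ A * Real.exp (c * ‖w‖ + -c * w.re) := fun w =>
    calc ‖F w‖ ≤ A * Real.exp (c * ‖I * w‖) * Real.exp (-c * w.re) := by
          rw [norm_F]; gcongr; exact hgrowth _
      _ = A * Real.exp (c * ‖w‖ + -c * w.re) := by simp [Real.exp_add, mul_assoc]
  have hA : 0 ≤ A := by simpa using (norm_nonneg _).trans (hgrowth 0)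
  have hF_exp : F =O[Bornology.cobounded ℂ ⊓ 𝓟 {w | 0 < w.re}]
      fun w => Real.exp (2 * |c| * ‖w‖ ^ (1 : ℝ)) := by
    refine Asymptotics.IsBigO.of_bound A (Eventually.of_forall fun w => ?_)
    rw [Real.norm_eq_abs, Real.abs_exp, Real.rpow_one]
    refine (growth_F w).trans ?_
    gcongr
    nlinarith [abs_le.mp (abs_re_le_norm w), abs_nonneg c, le_abs_self c, neg_abs_le c]
  have hF_pos : IsBoundedUnder (· ≤ ·) atTop fun x : ℝ => ‖F x‖ := by
    refine isBoundedUnder_of_eventually_le (a := A) ?_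
    filter_upwards [eventually_ge_atTop 0] with x hx
    simpa [abs_of_nonneg hx] using growth_F x
  have hF_im : ∀ x : ℝ, ‖F (x * I)‖ ≤ D := fun x => by
    rw [norm_F, mul_comm (x : ℂ), ← mul_assoc, I_mul_I]
    simpa using hreal (-x)
  have hF : Differentiable ℂ F := by fun_prop
  have hPL := PhragmenLindelof.right_half_plane_of_bounded_on_real hF.diffContOnCl
    ⟨1, one_lt_two, _, hF_exp⟩ hF_pos hF_im (z := -I * z) (by simpa using hz)
  have hIz : I * (-I * z) = z := by rw [← mul_assoc, mul_neg, I_mul_I, neg_neg, one_mul]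
  rw [norm_F, hIz, show (-I * z).re = z.im by simp, ← le_div_iff₀ (Real.exp_pos _),
    neg_mul, Real.exp_neg, div_inv_eq_mul] at hPL
  exact hPL

theorem norm_le_mul_exp_mul_abs_im_of_bounded_on_real {g : ℂ → ℂ} (hg : Differentiable ℂ g)
    {A c D : ℝ} (hgrowth : ∀ z, ‖g z‖ ≤ A * Real.exp (c * ‖z‖))
    (hreal : ∀ x : ℝ, ‖g x‖ ≤ D) (z : ℂ) :
    ‖g z‖ ≤ D * Real.exp (c * |z.im|) := by
  rcases le_total 0 z.im with hz | hz
  · simpa [abs_of_nonneg hz] using norm_le_mul_exp_mul_im_of_bounded_on_real hg hgrowth hreal hz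
  · have := norm_le_mul_exp_mul_im_of_bounded_on_real (g := fun w => g (-w)) (by fun_prop)
      (fun w => by simpa using hgrowth (-w)) (fun x => by simpa using hreal (-x))
      (z := -z) (by simpa using hz)
    simpa [abs_of_nonpos hz] using this

theorem Fintype.sum_apply_update {ι α M : Type*} [Fintype ι] [DecidableEq ι] [AddCommMonoid M]
    (f : ι → α → M) (z : ι → α) (i : ι) (a : α) :
    ∑ k, f k (Function.update z i a k) = f i a + ∑ k ∈ {i}ᶜ, f k (z k) := by
  simp_rw [Function.apply_update f, Finset.compl_eq_univ_sdiff]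
  exact Finset.sum_update_of_mem (Finset.mem_univ i) _ _

theorem norm_le_mul_exp_sum_mul_abs_im_of_bounded_on_real {ι : Type*} [Fintype ι]
    {h : (ι → ℂ) → ℂ} (hh : Differentiable ℂ h) {A D : ℝ} {c : ι → ℝ}
    (hgrowth : ∀ z, ‖h z‖ ≤ A * Real.exp (∑ k, c k * ‖z k‖))
    (hreal : ∀ x : ι → ℝ, ‖h (fun j => (x j : ℂ))‖ ≤ D) (z : ι → ℂ) :
    ‖h z‖ ≤ D * Real.exp (∑ k, c k * |(z k).im|) := by
  classical
  suffices ∀ s : Finset ι, ∀ z : ι → ℂ, (∀ k ∉ s, (z k).im = 0) →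
      ‖h z‖ ≤ D * Real.exp (∑ k, c k * |(z k).im|) from
    this Finset.univ z fun k hk => absurd (Finset.mem_univ k) hk
  intro s
  induction s using Finset.induction_on with
  | empty =>
    intro z hz
    have hz_real : z = fun j => ((z j).re : ℂ) := funext fun j => ext rfl (by simp [hz j])
    simpa [hz] using hz_real ▸ hreal fun j => (z j).re
  | insert i s _ ih =>
    intro z hz
    have hslice : Differentiable ℂ fun w => h (Function.update z i w) :=
      hh.comp fun w => (hasFDerivAt_update z w).differentiableAt
    have key := norm_le_mul_exp_mul_abs_im_of_bounded_on_real hslice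
      (A := A * Real.exp (∑ k ∈ {i}ᶜ, c k * ‖z k‖))
      (D := D * Real.exp (∑ k ∈ {i}ᶜ, c k * |(z k).im|))
      (fun w => by
        have := hgrowth (Function.update z i w)
        rwa [Fintype.sum_apply_update (fun k w => c k * ‖w‖), Real.exp_add, mul_comm (Real.exp _),
          ← mul_assoc] at this)
      (fun x => by
        have := ih (Function.update z i x) fun k hk => by
          rcases eq_or_ne k i with rfl | hki
          · simp
          · simpa [hki] using hz k (by simp [hki, hk])
        rwa [Fintype.sum_apply_update (fun k (w : ℂ) => c k * |w.im|), ofReal_im, abs_zero,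
          mul_zero, zero_add] at this)
      (z i)
    rw [Function.update_eq_self, mul_assoc, ← Real.exp_add, add_comm] at key
    rwa [Fintype.sum_eq_add_sum_compl i]

theorem expType_bound_on_Cn_general {n : ℕ} (h : (Fin n → ℂ) → ℂ) (τ : Fin n → ℝ)
    (hent : Differentiable ℂ h) (htype : ExpTypeLE h τ)
    (D : ℝ)
    (hbdd : ∀ x : Fin n → ℝ, ‖h (fun j => (x j : ℂ))‖ ≤ D) :
    ∀ z : Fin n → ℂ,
      ‖h z‖ ≤ D * Real.exp (∑ k, τ k * |(z k).im|) := by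
  intro z
  have hε : ∀ ε : ℝ, 0 < ε → ‖h z‖ ≤ D * Real.exp (∑ k, (τ k + ε) * |(z k).im|) := fun ε hε =>
    let ⟨_, hA⟩ := htype ε hε
    norm_le_mul_exp_sum_mul_abs_im_of_bounded_on_real hent hA hbdd z
  have hcont : Continuous fun ε : ℝ => D * Real.exp (∑ k, (τ k + ε) * |(z k).im|) := by
    fun_prop
  refine ge_of_tendsto (x := 𝓝[>] 0) ?_ (eventually_nhdsWithin_of_forall hε)
  simpa using (hcont.tendsto 0).mono_left nhdsWithin_le_nhds

/-- A multivariable Phragmén–Lindelöf-type bound: if `h : ℂⁿ → ℂ` is entire of exponential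
type at most `τ` and `|h| ≤ D` on `ℝⁿ`, then
`|h(z)| ≤ D exp(τ₁|Im z₁| + ⋯ + τₙ|Im zₙ|)` on all of `ℂⁿ`. -/
theorem expType_bound_on_Cn {n : ℕ} (h : (Fin n → ℂ) → ℂ) (τ : Fin n → ℝ)
    (hτ : ∀ k, 0 < τ k) (hent : Differentiable ℂ h) (htype : ExpTypeLE h τ)
    (D : ℝ) (hD : 0 ≤ D)
    (hbdd : ∀ x : Fin n → ℝ, ‖h (fun j => (x j : ℂ))‖ ≤ D) :
    ∀ z : Fin n → ℂ,
      ‖h z‖ ≤ D * Real.exp (∑ k, τ k * |(z k).im|) :=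
  expType_bound_on_Cn_general h τ hent htype D hbdd
end

section
/- Let C_1, …, C_n > 0 and suppose μ_1, μ_2 ∈ M(ℝⁿ) with μ_1 ≥ μ_2 satisfy, for each j = 1, …, n, s(j,m) := ∫_{ℝⁿ} x_j^m dμ_1(x) = ∫_{ℝⁿ} x_j^m dμ_2(x) + c(j,m) for all m ∈ ℕ, where for every ε > 0 there is a constant A_ε > 0 with |c(j,m)| ≤ A_ε (C_j+ε)^m for all m ∈ ℕ. Suppose further that ∑_{m=1}^∞ s(j,2m)^{−1/(2m)} = ∞ for each j = 1, …, n. Then μ_1 = μ_2 + σ, where σ is a positive measure on ℝⁿ supported on [−C_1, C_1] × ⋯ × [−C_n, C_n]. -/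
open MeasureTheory

/-- `μ ∈ M(ℝⁿ)`: a positive Borel measure on `ℝⁿ` all of whose absolute moments
`∫ ‖x‖^d dμ` are finite. -/
def HasAllMoments {n : ℕ} (μ : Measure (EuclideanSpace ℝ (Fin n))) : Prop :=
  ∀ d : ℝ, 0 ≤ d → Integrable (fun x : EuclideanSpace ℝ (Fin n) => ‖x‖ ^ d) μ

/-!
As `μ₂ ≤ μ₁` are finite, `σ = μ₁ - μ₂` is a positive measure with `μ₁ = μ₂ + σ` and moments
`∫ x_j^m dσ = c(j,m)`. Markov's inequality for `x_j^(2m)` gives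
`t^(2m) σ{t ≤ |x_j|} ≤ A_ε (C_j + ε)^(2m)`, which forces `σ{t ≤ |x_j|} = 0` as `m → ∞` once
`t > C_j + ε`. Hence `|x_j| ≤ C_j` holds `σ`-almost everywhere, for every `j`.
-/

open Filter Topology

section EvenMoments

variable {α : Type*} [MeasurableSpace α] {σ : Measure α} [IsFiniteMeasure σ] {f : α → ℝ}

theorem pow_mul_measureReal_le_abs_le_integral {t : ℝ} (ht : 0 ≤ t) {m : ℕ}
    (hint : Integrable (fun x => f x ^ (2 * m)) σ) :
    t ^ (2 * m) * σ.real {x | t ≤ |f x|} ≤ ∫ x, f x ^ (2 * m) ∂σ := by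
  have hsub : {x | t ≤ |f x|} ⊆ {x | t ^ (2 * m) ≤ f x ^ (2 * m)} :=
    fun x (hx : t ≤ |f x|) => by
      have h := pow_le_pow_left₀ ht hx (2 * m)
      rwa [(even_two_mul m).pow_abs] at h
  calc t ^ (2 * m) * σ.real {x | t ≤ |f x|}
      ≤ t ^ (2 * m) * σ.real {x | t ^ (2 * m) ≤ f x ^ (2 * m)} :=
        mul_le_mul_of_nonneg_left (measureReal_mono hsub) (by positivity)
    _ ≤ ∫ x, f x ^ (2 * m) ∂σ :=
        mul_meas_ge_le_integral_of_nonneg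
          (ae_of_all _ fun x => (even_two_mul m).pow_nonneg (f x)) hint _

theorem measure_le_abs_eq_zero_of_even_moment_le {r t A : ℝ} (hr : 0 ≤ r) (hrt : r < t)
    (hint : ∀ m, Integrable (fun x => f x ^ (2 * m)) σ)
    (hmom : ∀ m, ∫ x, f x ^ (2 * m) ∂σ ≤ A * r ^ (2 * m)) :
    σ {x | t ≤ |f x|} = 0 := by
  have ht : 0 < t := hr.trans_lt hrt
  have hbound : ∀ m : ℕ, σ.real {x | t ≤ |f x|} ≤ A * ((r / t) ^ 2) ^ m := fun m => by
    rw [← pow_mul, div_pow, ← mul_div_assoc, le_div_iff₀ (by positivity), mul_comm]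
    exact (pow_mul_measureReal_le_abs_le_integral ht.le (hint m)).trans (hmom m)
  have hq : (r / t) ^ 2 < 1 := by
    rw [sq_lt_one_iff₀ (by positivity)]
    exact (div_lt_one ht).2 hrt
  have hlim : Tendsto (fun m : ℕ => A * ((r / t) ^ 2) ^ m) atTop (𝓝 0) := by
    simpa using (tendsto_pow_atTop_nhds_zero_of_lt_one (by positivity) hq).const_mul A
  have hzero : σ.real {x | t ≤ |f x|} ≤ 0 := ge_of_tendsto' hlim hbound
  exact (measureReal_eq_zero_iff).1 (le_antisymm hzero measureReal_nonneg)

theorem ae_abs_le_of_even_moment_le {C : ℝ} (hC : 0 ≤ C)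
    (hint : ∀ m, Integrable (fun x => f x ^ (2 * m)) σ)
    (hmom : ∀ ε > 0, ∃ A, ∀ m, ∫ x, f x ^ (2 * m) ∂σ ≤ A * (C + ε) ^ (2 * m)) :
    ∀ᵐ x ∂σ, |f x| ≤ C := by
  obtain ⟨u, -, hCu, hu⟩ := exists_seq_strictAnti_tendsto C
  have hlt : ∀ k, ∀ᵐ x ∂σ, |f x| < u k := fun k => by
    obtain ⟨A, hA⟩ := hmom ((u k - C) / 2) (by linarith [hCu k])
    refine ae_iff.2 ?_
    simpa only [not_lt] using measure_le_abs_eq_zero_of_even_moment_le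
      (by linarith [hCu k]) (by linarith [hCu k]) hint hA
  filter_upwards [ae_all_iff.2 hlt] with x hx using ge_of_tendsto' hu fun k => (hx k).le

end EvenMoments

namespace HasAllMoments

variable {n : ℕ} {μ ν : Measure (EuclideanSpace ℝ (Fin n))}

theorem mono (h : HasAllMoments μ) (hνμ : ν ≤ μ) : HasAllMoments ν :=
  fun d hd => (h d hd).mono_measure hνμ

theorem isFiniteMeasure (h : HasAllMoments μ) : IsFiniteMeasure μ := by
  exact (integrable_const_iff_isFiniteMeasure one_ne_zero).1 (by simpa using h 0 le_rfl)

theorem integrable_coord_pow (h : HasAllMoments μ) (j : Fin n) (m : ℕ) :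
    Integrable (fun x : EuclideanSpace ℝ (Fin n) => x j ^ m) μ := by
  refine (h m m.cast_nonneg).mono (by fun_prop) (ae_of_all _ fun x => ?_)
  rw [Real.rpow_natCast, norm_pow, norm_pow, norm_norm]
  exact pow_le_pow_left₀ (norm_nonneg _) (PiLp.norm_apply_le x j) m

end HasAllMoments

theorem approx_carleman_dominated_general {n : ℕ} (C : Fin n → ℝ) (hC : ∀ j, 0 < C j)
    (μ₁ μ₂ : Measure (EuclideanSpace ℝ (Fin n)))
    (h₁ : HasAllMoments μ₁) (hle : μ₂ ≤ μ₁)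
    (c : Fin n → ℕ → ℝ)
    (hmom : ∀ (j : Fin n) (m : ℕ),
      ∫ x, (x j) ^ m ∂μ₁ = (∫ x, (x j) ^ m ∂μ₂) + c j m)
    (hc : ∀ ε : ℝ, 0 < ε → ∃ A : ℝ, 0 < A ∧ ∀ (j : Fin n) (m : ℕ),
      |c j m| ≤ A * (C j + ε) ^ m) :
    ∃ σ : Measure (EuclideanSpace ℝ (Fin n)),
      μ₁ = μ₂ + σ ∧ σ (((WithLp.ofLp : EuclideanSpace ℝ (Fin n) → (Fin n → ℝ)) ⁻¹'
        (Set.univ.pi fun j => Set.Icc (-(C j)) (C j)))ᶜ) = 0 := by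
  have := h₁.isFiniteMeasure
  have : IsFiniteMeasure μ₂ := isFiniteMeasure_of_le μ₁ hle
  have hdecomp : μ₁ = μ₂ + (μ₁ - μ₂) := by rw [add_comm, Measure.sub_add_cancel_of_le hle]
  have hσ : HasAllMoments (μ₁ - μ₂) := h₁.mono Measure.sub_le
  have := hσ.isFiniteMeasure
  have hmomσ : ∀ j m, ∫ x, x j ^ m ∂(μ₁ - μ₂) = c j m := fun j m => by
    have h := hmom j m
    rw [hdecomp, integral_add_measure ((h₁.mono hle).integrable_coord_pow j m)
      (hσ.integrable_coord_pow j m)] at h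
    linarith
  have hbox : ∀ j, ∀ᵐ x ∂(μ₁ - μ₂), |x j| ≤ C j := fun j =>
    ae_abs_le_of_even_moment_le (hC j).le (fun m => hσ.integrable_coord_pow j _)
      fun ε hε => by
        obtain ⟨A, -, hA⟩ := hc ε hε
        exact ⟨A, fun m => (hmomσ j _).trans_le ((le_abs_self _).trans (hA j _))⟩
  refine ⟨μ₁ - μ₂, hdecomp, mem_ae_iff.1 ?_⟩
  filter_upwards [ae_all_iff.2 hbox] with x hx
  exact Set.mem_univ_pi.2 fun j => abs_le.1 (hx j)

/-- Approximate Carleman theorem for dominated positive measures: if `μ₁ ≥ μ₂` in `M(ℝⁿ)`,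
the one-dimensional marginal moments `s(j,m) = ∫ x_j^m dμ₁` satisfy
`∫ x_j^m dμ₁ = ∫ x_j^m dμ₂ + c(j,m)` with `|c(j,m)| ≤ A_ε (C_j+ε)^m` for all `ε > 0`, and
`∑_m s(j,2m)^{-1/(2m)} = ∞` for each `j`, then `μ₁ = μ₂ + σ` with `σ` a positive measure
supported on `[-C₁,C₁] × ⋯ × [-Cₙ,Cₙ]`. -/
theorem approx_carleman_dominated {n : ℕ} (C : Fin n → ℝ) (hC : ∀ j, 0 < C j)
    (μ₁ μ₂ : Measure (EuclideanSpace ℝ (Fin n)))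
    (h₁ : HasAllMoments μ₁) (h₂ : HasAllMoments μ₂) (hle : μ₂ ≤ μ₁)
    (c : Fin n → ℕ → ℝ)
    (hmom : ∀ (j : Fin n) (m : ℕ),
      ∫ x, (x j) ^ m ∂μ₁ = (∫ x, (x j) ^ m ∂μ₂) + c j m)
    (hc : ∀ ε : ℝ, 0 < ε → ∃ A : ℝ, 0 < A ∧ ∀ (j : Fin n) (m : ℕ),
      |c j m| ≤ A * (C j + ε) ^ m)
    (hdiv : ∀ j : Fin n, ¬ Summable (fun m : ℕ =>
      (∫ x, (x j) ^ (2 * (m + 1)) ∂μ₁) ^ (-(1 : ℝ) / (2 * (m + 1))))) :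
    ∃ σ : Measure (EuclideanSpace ℝ (Fin n)),
      μ₁ = μ₂ + σ ∧ σ (((WithLp.ofLp : EuclideanSpace ℝ (Fin n) → (Fin n → ℝ)) ⁻¹'
        (Set.univ.pi fun j => Set.Icc (-(C j)) (C j)))ᶜ) = 0 :=
  approx_carleman_dominated_general C hC μ₁ μ₂ h₁ hle c hmom hc
end

section
/- Let f : closure(ℂ_+ⁿ) → ℂ be continuous and holomorphic on ℂ_+ⁿ, and let a > 0. Suppose |f| is bounded by M on the set (iℝ)ⁿ and that for all ε > 0 there is a constant c_ε > 0 with |f(z)| ≤ c_ε e^{(a+ε)‖z‖} for all z ∈ closure(ℂ_+ⁿ), where ‖·‖ is any norm on ℂⁿ. Then |f(z)| ≤ M e^{a‖Re z‖} for all z ∈ closure(ℂ_+ⁿ), where Re z denotes the vector (Re z_1, …, Re z_n) ∈ ℝⁿ ⊂ ℂⁿ. -/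
/-!
Restricted to the complex line `w ↦ w • Re z + i Im z`, which maps the right half-plane into
`ℂ₊ⁿ`, the imaginary axis into `(iℝ)ⁿ` and `1` to `z`, the function `f` becomes a function of
one variable of exponential type `(a + ε) N(Re z)` bounded by `M` on the imaginary axis. The
one-variable Phragmén–Lindelöf principle, applied after multiplying by `exp(-(a + ε) N(Re z) w)`,
gives `|f z| ≤ M e^{(a+ε) N(Re z)}`; let `ε → 0`. The boundary of the polyhalf-plane follows by
continuity, since `N` is a seminorm on a finite-dimensional space.
-/

open Complex Set Filter Topology

theorem closure_setOf_forall_pos_re {ι : Type*} :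
    closure {z : ι → ℂ | ∀ k, 0 < (z k).re} = {z | ∀ k, 0 ≤ (z k).re} := by
  have h : ∀ r : ℝ → Prop, {z : ι → ℂ | ∀ k, r (z k).re} = univ.pi fun _ => {w | r w.re} := by
    intro r; ext; simp
  rw [h, h, closure_pi_set, closure_setOfPred_lt_re]

theorem PhragmenLindelof.right_half_plane_of_exp_growth {E : Type*} [NormedAddCommGroup E]
    [NormedSpace ℂ E] {g : ℂ → E} {C β M : ℝ} (hd : DiffContOnCl ℂ g {w | 0 < w.re})
    (hgrowth : ∀ w : ℂ, 0 ≤ w.re → ‖g w‖ ≤ C * Real.exp (β * ‖w‖))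
    (him : ∀ y : ℝ, ‖g (y * I)‖ ≤ M) {w : ℂ} (hw : 0 ≤ w.re) :
    ‖g w‖ ≤ M * Real.exp (β * w.re) := by
  set G : ℂ → E := fun w => exp (-β * w) • g w
  have hG : ∀ w, ‖G w‖ = Real.exp (-β * w.re) * ‖g w‖ := fun w => by
    simp [G, norm_smul, norm_exp]
  have hC : 0 ≤ C := by simpa using (norm_nonneg _).trans (hgrowth 0 le_rfl)
  have hGd : DiffContOnCl ℂ G {w | 0 < w.re} :=
    (Differentiable.diffContOnCl (by fun_prop)).smul hd
  have hGexp : ∃ c < (2 : ℝ), ∃ B, G =O[Bornology.cobounded ℂ ⊓ 𝓟 {w | 0 < w.re}]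
      fun w => Real.exp (B * ‖w‖ ^ c) := by
    refine ⟨1, one_lt_two, 2 * |β|, Asymptotics.IsBigO.of_bound C ?_⟩
    refine eventually_inf_principal.2 (Eventually.of_forall fun w (hw : 0 < w.re) => ?_)
    have hexp : β * ‖w‖ + -β * w.re ≤ 2 * |β| * ‖w‖ := by
      nlinarith [abs_re_le_norm w, le_abs_self β, neg_abs_le β, abs_nonneg β, norm_nonneg w,
        neg_abs_le w.re, le_abs_self w.re]
    calc ‖G w‖ ≤ Real.exp (-β * w.re) * (C * Real.exp (β * ‖w‖)) := by
          rw [hG]; gcongr; exact hgrowth w hw.le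
      _ = C * Real.exp (β * ‖w‖ + -β * w.re) := by rw [Real.exp_add]; ring
      _ ≤ C * ‖Real.exp (2 * |β| * ‖w‖ ^ (1 : ℝ))‖ := by
          rw [Real.rpow_one, Real.norm_of_nonneg (Real.exp_nonneg _)]; gcongr
  have hGre : IsBoundedUnder (· ≤ ·) atTop fun x : ℝ => ‖G x‖ := by
    refine isBoundedUnder_of_eventually_le (a := C) ?_
    filter_upwards [eventually_ge_atTop 0] with x hx
    calc ‖G x‖ ≤ Real.exp (-β * x) * (C * Real.exp (β * x)) := by
          rw [hG, ofReal_re]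
          gcongr
          simpa [abs_of_nonneg hx] using hgrowth x (by simpa using hx)
      _ = C := by rw [mul_left_comm, ← Real.exp_add]; simp
  have hGim : ∀ y : ℝ, ‖G (y * I)‖ ≤ M := fun y => by simpa [hG] using him y
  calc ‖g w‖ = Real.exp (β * w.re) * ‖G w‖ := by
        rw [hG, ← mul_assoc, ← Real.exp_add]; simp
    _ ≤ M * Real.exp (β * w.re) := by
        rw [mul_comm]
        gcongr
        exact PhragmenLindelof.right_half_plane_of_bounded_on_real hGd hGexp hGre hGim hw

theorem norm_le_mul_exp_seminorm_re_of_forall_pos_re {ι E : Type*} [Fintype ι]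
    [NormedAddCommGroup E] [NormedSpace ℂ E] (p : Seminorm ℂ (ι → ℂ)) {f : (ι → ℂ) → E}
    {C β M : ℝ} (hβ : 0 ≤ β)
    (hcont : ContinuousOn f {z | ∀ k, 0 ≤ (z k).re})
    (hhol : DifferentiableOn ℂ f {z | ∀ k, 0 < (z k).re})
    (hM : ∀ z : ι → ℂ, (∀ k, (z k).re = 0) → ‖f z‖ ≤ M)
    (hgrowth : ∀ z : ι → ℂ, (∀ k, 0 ≤ (z k).re) → ‖f z‖ ≤ C * Real.exp (β * p z))
    {z : ι → ℂ} (hz : ∀ k, 0 < (z k).re) :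
    ‖f z‖ ≤ M * Real.exp (β * p fun k => ((z k).re : ℂ)) := by
  set v : ι → ℂ := fun k => ((z k).re : ℂ)
  set u : ι → ℂ := fun k => (z k).im * I
  -- the complex line through `z` that meets `(iℝ)ⁿ` along the imaginary axis
  set φ : ℂ → ι → ℂ := fun w => w • v + u
  have hφre : ∀ w k, (φ w k).re = w.re * (z k).re := fun w k => by simp [φ, v, u]
  have hφ1 : φ 1 = z := funext fun k => by simp [φ, v, u, re_add_im]
  have hf : DiffContOnCl ℂ f {z : ι → ℂ | ∀ k, 0 < (z k).re} :=
    ⟨hhol, closure_setOf_forall_pos_re (ι := ι) ▸ hcont⟩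
  have hd : DiffContOnCl ℂ (f ∘ φ) {w | 0 < w.re} :=
    hf.comp (Differentiable.diffContOnCl (by fun_prop)) fun w hw k => by
      rw [hφre]; exact mul_pos hw (hz k)
  have hC : 0 ≤ C := by
    simpa using (norm_nonneg _).trans (hgrowth 0 fun _ => le_rfl)
  have hgrowth' : ∀ w : ℂ, 0 ≤ w.re →
      ‖f (φ w)‖ ≤ C * Real.exp (β * p u) * Real.exp (β * p v * ‖w‖) := fun w hw => by
    have hpφ : p (φ w) ≤ ‖w‖ * p v + p u :=
      (map_add_le_add p _ _).trans_eq (by rw [map_smul_eq_mul])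
    calc ‖f (φ w)‖ ≤ C * Real.exp (β * p (φ w)) :=
          hgrowth _ fun k => by rw [hφre]; exact mul_nonneg hw (hz k).le
      _ ≤ C * Real.exp (β * (‖w‖ * p v + p u)) := by gcongr
      _ = C * Real.exp (β * p u) * Real.exp (β * p v * ‖w‖) := by
          rw [mul_assoc, ← Real.exp_add]; ring_nf
  have him : ∀ y : ℝ, ‖f (φ (y * I))‖ ≤ M := fun y => hM _ fun k => by simp [hφre]
  simpa [hφ1] using PhragmenLindelof.right_half_plane_of_exp_growth hd hgrowth' him
    (w := 1) zero_le_one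

theorem Seminorm.continuous_of_finiteDimensional {E : Type*} [NormedAddCommGroup E]
    [NormedSpace ℂ E] [FiniteDimensional ℂ E] (p : Seminorm ℂ E) : Continuous p :=
  have : FiniteDimensional ℝ E := .complexToReal E
  continuousOn_univ.1 (p.convexOn.continuousOn isOpen_univ)

theorem phragmen_lindelof_polyhalfplane_general {n : ℕ}
    (f : (Fin n → ℂ) → ℂ)
    (hcont : ContinuousOn f {z : Fin n → ℂ | ∀ k, 0 ≤ (z k).re})
    (hhol : DifferentiableOn ℂ f {z : Fin n → ℂ | ∀ k, 0 < (z k).re})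
    (a : ℝ) (ha : 0 < a) (M : ℝ)
    (hM : ∀ z : Fin n → ℂ, (∀ k, (z k).re = 0) → ‖f z‖ ≤ M)
    (N : (Fin n → ℂ) → ℝ)
    (hN_add : ∀ v w : Fin n → ℂ, N (v + w) ≤ N v + N w)
    (hN_smul : ∀ (c : ℂ) (v : Fin n → ℂ), N (c • v) = ‖c‖ * N v)
    (hgrowth : ∀ ε : ℝ, 0 < ε → ∃ cε : ℝ, 0 < cε ∧ ∀ z : Fin n → ℂ,
      (∀ k, 0 ≤ (z k).re) → ‖f z‖ ≤ cε * Real.exp ((a + ε) * N z)) :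
    ∀ z : Fin n → ℂ, (∀ k, 0 ≤ (z k).re) →
      ‖f z‖ ≤ M * Real.exp (a * N (fun k => ((z k).re : ℂ))) := by
  set p := Seminorm.of N hN_add hN_smul
  have hbound : Continuous fun z : Fin n → ℂ => M * Real.exp (a * p fun k => ((z k).re : ℂ)) := by
    have hp := p.continuous_of_finiteDimensional
    fun_prop
  have hinterior : ∀ z : Fin n → ℂ, (∀ k, 0 < (z k).re) →
      ‖f z‖ ≤ M * Real.exp (a * p fun k => ((z k).re : ℂ)) := by
    intro z hz
    have hε : ∀ ε ∈ Ioi (0 : ℝ), ‖f z‖ ≤ M * Real.exp ((a + ε) * p fun k => ((z k).re : ℂ)) :=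
      fun ε (hε : 0 < ε) => have ⟨_, _, hc⟩ := hgrowth ε hε
        norm_le_mul_exp_seminorm_re_of_forall_pos_re p (by linarith) hcont hhol hM hc hz
    have hlim : Tendsto (fun ε => M * Real.exp ((a + ε) * p fun k => ((z k).re : ℂ))) (𝓝[>] 0)
        (𝓝 (M * Real.exp (a * p fun k => ((z k).re : ℂ)))) :=
      tendsto_nhdsWithin_of_tendsto_nhds (Continuous.tendsto' (by fun_prop) _ _ (by simp))
    exact ge_of_tendsto hlim (eventually_nhdsWithin_of_forall hε)
  intro z hz
  show ‖f z‖ ≤ M * Real.exp (a * p _)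
  exact ContinuousWithinAt.closure_le (closure_setOf_forall_pos_re (ι := Fin n) ▸ hz)
    ((hcont z hz).mono fun w hw k => (hw k).le).norm hbound.continuousWithinAt hinterior

/-- Musin's multivariable Phragmén–Lindelöf theorem: if `f` is continuous on the closed
polyhalf-plane `closure(ℂ₊ⁿ)`, holomorphic on `ℂ₊ⁿ`, bounded by `M` on `(iℝ)ⁿ`, and for all
`ε > 0` satisfies `|f(z)| ≤ c_ε e^{(a+ε)‖z‖}` on `closure(ℂ₊ⁿ)` for a norm `‖·‖` on `ℂⁿ`,
then `|f(z)| ≤ M e^{a‖Re z‖}` on `closure(ℂ₊ⁿ)`. -/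
theorem phragmen_lindelof_polyhalfplane {n : ℕ}
    (f : (Fin n → ℂ) → ℂ)
    (hcont : ContinuousOn f {z : Fin n → ℂ | ∀ k, 0 ≤ (z k).re})
    (hhol : DifferentiableOn ℂ f {z : Fin n → ℂ | ∀ k, 0 < (z k).re})
    (a : ℝ) (ha : 0 < a) (M : ℝ)
    (hM : ∀ z : Fin n → ℂ, (∀ k, (z k).re = 0) → ‖f z‖ ≤ M)
    (N : (Fin n → ℂ) → ℝ)
    (hN_add : ∀ v w : Fin n → ℂ, N (v + w) ≤ N v + N w)
    (hN_smul : ∀ (c : ℂ) (v : Fin n → ℂ), N (c • v) = ‖c‖ * N v)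
    (hN_pos : ∀ v : Fin n → ℂ, v ≠ 0 → 0 < N v)
    (hgrowth : ∀ ε : ℝ, 0 < ε → ∃ cε : ℝ, 0 < cε ∧ ∀ z : Fin n → ℂ,
      (∀ k, 0 ≤ (z k).re) → ‖f z‖ ≤ cε * Real.exp ((a + ε) * N z)) :
    ∀ z : Fin n → ℂ, (∀ k, 0 ≤ (z k).re) →
      ‖f z‖ ≤ M * Real.exp (a * N (fun k => ((z k).re : ℂ))) :=
  phragmen_lindelof_polyhalfplane_general f hcont hhol a ha M hM N hN_add hN_smul hgrowth
end

section
/- Let (m_k)_{k≥0} be a Carleman sequence and let n ≥ 1 be an integer. Then the sequence (m̃_k)_{k≥0} defined by m̃_k = (m_{nk})^{1/n} is also a Carleman sequence; that is, m̃_0 = 1, m̃_k² ≤ m̃_{k−1} m̃_{k+1} for all k ≥ 1, and ∑_{k≥1} m̃_k^{−1/k} = ∞. -/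
/-- A Carleman sequence: positive reals with `m 0 = 1`, log-convexity, and
`∑_{k ≥ 1} m_k^{-1/k} = ∞`. -/
def IsCarleman (m : ℕ → ℝ) : Prop :=
  (∀ k, 0 < m k) ∧ m 0 = 1 ∧
    (∀ k : ℕ, 1 ≤ k → (m k) ^ 2 ≤ m (k - 1) * m (k + 1)) ∧
    ¬ Summable (fun k : ℕ => (m (k + 1)) ^ (-(1 : ℝ) / (k + 1)))

section Aux

variable {m : ℕ → ℝ} (hpos : ∀ k, 0 < m k) (h0 : m 0 = 1)
  (hconv : ∀ k : ℕ, 1 ≤ k → (m k) ^ 2 ≤ m (k - 1) * m (k + 1))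

include hpos hconv

/-- Ratios are increasing: `m (a+1) * m b ≤ m a * m (b+1)` for `a ≤ b`. -/
lemma carleman_ratio : ∀ a b : ℕ, a ≤ b → m (a + 1) * m b ≤ m a * m (b + 1) := by
  intro a b hab
  induction b, hab using Nat.le_induction with
  | base => rw [mul_comm]
  | succ b hab ih =>
    have h2 := hconv (b + 1) (by omega)
    simp only [Nat.add_sub_cancel] at h2
    nlinarith [hpos a, hpos (a + 1), hpos b, hpos (b + 1), hpos (b + 2),
      mul_le_mul_of_nonneg_left h2 (hpos (a + 1)).le,
      mul_le_mul_of_nonneg_right ih (hpos (b + 2)).le]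

/-- Log-convexity at distance `t`. -/
lemma carleman_conv2 : ∀ t a : ℕ, m (a + t) ^ 2 ≤ m a * m (a + t + t) := by
  intro t
  induction t with
  | zero => intro a; simpa [pow_two] using le_refl (m a * m a)
  | succ t ih =>
    intro a
    have h1 := ih (a + 1)
    have h2 := carleman_ratio hpos hconv a (a + 1 + t + t) (by omega)
    have e2 : a + (t + 1) + (t + 1) = a + 1 + t + t + 1 := by omega
    have e1 : a + (t + 1) = a + 1 + t := by omega
    rw [e2, e1]
    exact h1.trans h2

include h0 in
/-- `m k ^ (k+1) ≤ m (k+1) ^ k`. -/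
lemma carleman_pow : ∀ k : ℕ, m k ^ (k + 1) ≤ m (k + 1) ^ k := by
  intro k
  induction k with
  | zero => simp [h0]
  | succ k ih =>
    have h2 := hconv (k + 1) (by omega)
    simp only [Nat.add_sub_cancel] at h2
    have key : (m (k + 1) ^ 2) ^ (k + 1) ≤ (m k * m (k + 2)) ^ (k + 1) :=
      pow_le_pow_left₀ (sq_nonneg _) h2 _
    have e1 : (m (k + 1) ^ 2) ^ (k + 1) = m (k + 1) ^ (k + 2) * m (k + 1) ^ k := by ring
    have e2 : (m k * m (k + 2)) ^ (k + 1) = m (k + 2) ^ (k + 1) * m k ^ (k + 1) := by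
      rw [mul_pow]; ring
    have ih' : m (k + 1) ^ (k + 2) * m k ^ (k + 1) ≤ m (k + 1) ^ (k + 2) * m (k + 1) ^ k :=
      mul_le_mul_of_nonneg_left ih (pow_nonneg (hpos _).le _)
    have := ih'.trans (e1 ▸ (key.trans_eq e2))
    exact le_of_mul_le_mul_right this (pow_pos (hpos k) (k + 1))

include h0 in
/-- `(m k)^{1/k}` is increasing for `k ≥ 1`. -/
lemma carleman_root_mono : ∀ i j : ℕ, 1 ≤ i → i ≤ j →
    m i ^ ((1 : ℝ) / i) ≤ m j ^ ((1 : ℝ) / j) := by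
  intro i j hi hij
  induction j, hij using Nat.le_induction with
  | base => exact le_rfl
  | succ j hij ih =>
    refine ih.trans ?_
    push_cast
    have hj : 1 ≤ j := le_trans hi hij
    have hj0 : (j : ℝ) ≠ 0 := Nat.cast_ne_zero.mpr (by omega)
    have hj10 : ((j : ℝ) + 1) ≠ 0 := by positivity
    have e1 : (m j ^ ((1 : ℝ) / j)) ^ (j * (j + 1)) = m j ^ (j + 1) := by
      rw [← Real.rpow_natCast (m j ^ ((1 : ℝ) / j)) (j * (j + 1)),
        ← Real.rpow_mul (hpos j).le, ← Real.rpow_natCast (m j) (j + 1)]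
      congr 1
      push_cast
      field_simp
    have e2 : (m (j + 1) ^ ((1 : ℝ) / ((j : ℝ) + 1))) ^ (j * (j + 1)) = m (j + 1) ^ j := by
      rw [← Real.rpow_natCast (m (j + 1) ^ ((1 : ℝ) / ((j : ℝ) + 1))) (j * (j + 1)),
        ← Real.rpow_mul (hpos (j + 1)).le, ← Real.rpow_natCast (m (j + 1)) j]
      congr 1
      push_cast
      field_simp
    have hp : (m j ^ ((1 : ℝ) / j)) ^ (j * (j + 1)) ≤
        (m (j + 1) ^ ((1 : ℝ) / ((j : ℝ) + 1))) ^ (j * (j + 1)) := by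
      rw [e1, e2]
      exact carleman_pow hpos h0 hconv j
    exact le_of_pow_le_pow_left₀ (by positivity) (Real.rpow_nonneg (hpos _).le _) hp

include h0 in
/-- `(m k)^{-1/k}` is decreasing for `k ≥ 1`. -/
lemma carleman_negroot_anti : ∀ i j : ℕ, 1 ≤ i → i ≤ j →
    m j ^ (-(1 : ℝ) / j) ≤ m i ^ (-(1 : ℝ) / i) := by
  intro i j hi hij
  have h := carleman_root_mono hpos h0 hconv i j hi hij
  rw [neg_div, neg_div, Real.rpow_neg (hpos i).le, Real.rpow_neg (hpos j).le]
  exact inv_anti₀ (Real.rpow_pos_of_pos (hpos i) _) h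

end Aux

/-- If `(m_k)` is a Carleman sequence and `n ≥ 1`, then `(m̃_k) = ((m_{nk})^{1/n})` is
also a Carleman sequence. -/
theorem isCarleman_subsequence_root (m : ℕ → ℝ) (hm : IsCarleman m)
    (n : ℕ) (hn : 1 ≤ n) :
    IsCarleman (fun k => (m (n * k)) ^ ((1 : ℝ) / n)) := by
  obtain ⟨hpos, h0, hconv, hdiv⟩ := hm
  have hn0 : (n : ℝ) ≠ 0 := Nat.cast_ne_zero.mpr (by omega)
  refine ⟨fun k => Real.rpow_pos_of_pos (hpos _) _, by simp [h0], ?_, ?_⟩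
  · -- log-convexity
    intro k hk
    obtain ⟨j, rfl⟩ : ∃ j, k = j + 1 := ⟨k - 1, by omega⟩
    simp only [Nat.add_sub_cancel]
    have h2 := carleman_conv2 hpos hconv n (n * j)
    have e1 : n * j + n = n * (j + 1) := by ring
    have e2 : n * j + n + n = n * (j + 1 + 1) := by ring
    rw [e2, e1] at h2
    set X := n * (j + 1)
    have lhs : (m X ^ ((1 : ℝ) / n)) ^ 2 = (m X ^ 2 : ℝ) ^ ((1 : ℝ) / n) := by
      rw [← Real.rpow_natCast (m X ^ ((1 : ℝ) / n)) 2, ← Real.rpow_mul (hpos X).le,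
        mul_comm, Real.rpow_mul (hpos X).le, Real.rpow_natCast]
    rw [lhs, ← Real.mul_rpow (hpos _).le (hpos _).le]
    exact Real.rpow_le_rpow (sq_nonneg _) h2 (by positivity)
  · -- divergence
    intro hS
    apply hdiv
    -- rewrite the summable hypothesis
    have hS' : Summable (fun k : ℕ => m (n * (k + 1)) ^ (-(1 : ℝ) / ((n * (k + 1) : ℕ) : ℝ))) := by
      refine hS.congr fun k => ?_
      rw [← Real.rpow_mul (hpos _).le]
      congr 1
      push_cast
      field_simp
    set g : ℕ → ℝ := fun j => m j ^ (-(1 : ℝ) / (j : ℝ)) with hg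
    have gnonneg : ∀ j, 0 ≤ g j := fun j => Real.rpow_nonneg (hpos _).le _
    have ganti : ∀ i j : ℕ, 1 ≤ i → i ≤ j → g j ≤ g i :=
      carleman_negroot_anti hpos h0 hconv
    -- block sum identity
    have hblock : ∀ Q : ℕ, ∑ k ∈ Finset.range (n * Q), g (n * (k / n + 1)) =
        (n : ℝ) * ∑ q ∈ Finset.range Q, g (n * (q + 1)) := by
      intro Q
      induction Q with
      | zero => simp
      | succ Q ih =>
        have e : n * (Q + 1) = n * Q + n := by ring
        rw [e, Finset.sum_range_add, ih, Finset.sum_range_succ]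
        have : ∀ i ∈ Finset.range n, g (n * ((n * Q + i) / n + 1)) = g (n * (Q + 1)) := by
          intro i hi
          congr 2
          rw [Nat.mul_add_div (by omega), Nat.div_eq_of_lt (Finset.mem_range.mp hi)]
        rw [Finset.sum_congr rfl this, Finset.sum_const, Finset.card_range, nsmul_eq_mul]
        ring
    -- summability of the shifted series
    have hshift : Summable (fun k : ℕ => g (k + n)) := by
      apply summable_of_sum_range_le (c := (n : ℝ) * ∑' k, g (n * (k + 1)))
        (fun k => gnonneg _)
      intro N
      calc ∑ k ∈ Finset.range N, g (k + n)
          ≤ ∑ k ∈ Finset.range N, g (n * (k / n + 1)) := by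
            refine Finset.sum_le_sum fun k _ => ganti _ _
              (Nat.one_le_iff_ne_zero.mpr (Nat.mul_ne_zero (by omega) (Nat.succ_ne_zero _))) ?_
            have hdk : n * (k / n) ≤ k := by
              rw [mul_comm]; exact Nat.div_mul_le_self k n
            calc n * (k / n + 1) = n * (k / n) + n := by ring
              _ ≤ k + n := Nat.add_le_add_right hdk n
        _ ≤ ∑ k ∈ Finset.range (n * N), g (n * (k / n + 1)) := by
            refine Finset.sum_le_sum_of_subset_of_nonneg
              (Finset.range_subset_range.mpr (Nat.le_mul_of_pos_left N (by omega)))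
              fun i _ _ => gnonneg _
        _ = (n : ℝ) * ∑ q ∈ Finset.range N, g (n * (q + 1)) := hblock N
        _ ≤ (n : ℝ) * ∑' k, g (n * (k + 1)) := by
            refine mul_le_mul_of_nonneg_left ?_ (by positivity)
            exact Summable.sum_le_tsum (Finset.range N) (fun i _ => gnonneg _) hS'
    -- conclude
    have target : Summable (fun k : ℕ => g (k + 1)) := by
      rw [← summable_nat_add_iff (n - 1)]
      refine hshift.congr fun k => ?_
      congr 1
      omega
    refine target.congr fun k => ?_
    simp only [hg]
    push_cast
    rfl
end
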